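/- Let ω ∈ 𝕋 with associated data (I, J, L, L′, M, M′, σ); write M = {m₁ < … < m_t}, J = {j₁ < … < j_k}, L′ = {ℓ′₁ < … < ℓ′_{s′}}. Set R = {−t,…,−1} ∪ I ∪ L′ and S = J ∪ M ∪ {q+1,…,q+s′}, viewed as finite subsets of ℤ (the elements of I, L′ lying in {1,…,p} and those of J, M in {1,…,q}), and let w : S → R be the bijection with w(m_i) = −i for 1 ≤ i ≤ t, w(j) = σ(j) for j ∈ J, and w(q+i) = ℓ′_{s′+1−i} for 1 ≤ i ≤ s′; let P_w be the R×S matrix with (P_w)_{ρ,ς} = 1 if ρ = w(ς) and 0 otherwise. Let ς be the (I∪L′)×(J∪M) matrix with ς_{i,j} = 1 if j ∈ J and i = σ(j) and 0 otherwise, let Γ be the space of matrices γ indexed by (J∪M)×(I∪L′) such that ςγ and γς are strictly upper triangular, and let η₂(γ) be the S×R matrix extending γ by zero. Then η₂ restricts to a linear bijection from Γ onto the set Z = {z ∈ Mat_{S×R}(ℂ) : P_w z and z P_w are strictly upper triangular}. Moreover, for every γ ∈ Γ with z = η₂(γ) and every ℓ ≥ 0, η₂((γς)^ℓ γ) = (z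 P_w)^ℓ z. -/

import Mathlib

open scoped Classical
open Matrix

noncomputable section

/-- A partial permutation matrix: entries in `{0,1}`, at most one `1` in each row
and in each column. -/
def IsPartialPerm {m n : ℕ} (τ : Matrix (Fin m) (Fin n) ℂ) : Prop :=
  (∀ i j, τ i j = 0 ∨ τ i j = 1) ∧
  (∀ i j j', τ i j = 1 → τ i j' = 1 → j = j') ∧
  (∀ i i' j, τ i j = 1 → τ i' j = 1 → i = i')

/-- `(p+q) × r` complex matrices, rows indexed by `Fin p ⊕ Fin q`. -/
abbrev MatT (p q r : ℕ) := Matrix (Fin p ⊕ Fin q) (Fin r) ℂ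

/-- The set `𝕋`: `(p+q) × r` matrices of rank `r` whose top `p × r` and bottom
`q × r` blocks are partial permutation matrices. -/
def InT {p q r : ℕ} (ω : MatT p q r) : Prop :=
  ω.rank = r ∧
  IsPartialPerm (Matrix.of fun (i : Fin p) (c : Fin r) => ω (Sum.inl i) c) ∧
  IsPartialPerm (Matrix.of fun (j : Fin q) (c : Fin r) => ω (Sum.inr j) c)

/-- The permutation matrix of `w`: `(P_w)_{i,j} = 1` iff `i = w j`. -/
def permMat {r : ℕ} (w : Equiv.Perm (Fin r)) : Matrix (Fin r) (Fin r) ℂ :=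
  Matrix.of fun i j => if i = w j then 1 else 0

/-- `[ω]`, the column space of `ω`, as a subspace of `ℂ^{p+q}`. -/
def colSpace {p q r : ℕ} (ω : MatT p q r) : Submodule ℂ (Fin p ⊕ Fin q → ℂ) :=
  LinearMap.range ω.mulVecLin

/-- `i ∈ I`: some column of `ω` has a `1` in row `i` (top block) and a `1` in some
bottom row. -/
def memI {p q r : ℕ} (ω : MatT p q r) (i : Fin p) : Prop :=
  ∃ c, ω (Sum.inl i) c = 1 ∧ ∃ j : Fin q, ω (Sum.inr j) c = 1

/-- `i ∈ L`: some column of `ω` has a `1` in row `i` (top block) and no other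
nonzero entry. -/
def memL {p q r : ℕ} (ω : MatT p q r) (i : Fin p) : Prop :=
  ∃ c, ω (Sum.inl i) c = 1 ∧ ∀ k, k ≠ Sum.inl i → ω k c = 0

/-- `i ∈ L'`: row `i` of the top block is zero. -/
def memL' {p q r : ℕ} (ω : MatT p q r) (i : Fin p) : Prop :=
  ∀ c, ω (Sum.inl i) c = 0

/-- `j ∈ J`: some column of `ω` has a `1` in row `p+j` and a `1` in some top row. -/
def memJ {p q r : ℕ} (ω : MatT p q r) (j : Fin q) : Prop :=
  ∃ c, ω (Sum.inr j) c = 1 ∧ ∃ i : Fin p, ω (Sum.inl i) c = 1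

/-- `j ∈ M`: some column of `ω` has a `1` in row `p+j` and no other nonzero entry. -/
def memM {p q r : ℕ} (ω : MatT p q r) (j : Fin q) : Prop :=
  ∃ c, ω (Sum.inr j) c = 1 ∧ ∀ k, k ≠ Sum.inr j → ω k c = 0

/-- `j ∈ M'`: row `p+j` of `ω` (i.e. row `j` of the bottom block) is zero. -/
def memM' {p q r : ℕ} (ω : MatT p q r) (j : Fin q) : Prop :=
  ∀ c, ω (Sum.inr j) c = 0

/-- The conormal direction `D_ω`: block matrices `(a b; c d)` with `a, d` strictly
upper triangular, column space contained in `[ω]`, and `[ω]` contained in the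
kernel. -/
def Dset {p q r : ℕ} (ω : MatT p q r) :
    Set (Matrix (Fin p ⊕ Fin q) (Fin p ⊕ Fin q) ℂ) :=
  {x | (∀ i j : Fin p, j ≤ i → x (Sum.inl i) (Sum.inl j) = 0) ∧
       (∀ i j : Fin q, j ≤ i → x (Sum.inr i) (Sum.inr j) = 0) ∧
       LinearMap.range x.mulVecLin ≤ colSpace ω ∧
       colSpace ω ≤ LinearMap.ker x.mulVecLin}

/-- The index set `I ∪ L'` (as a subtype of `Fin p`). -/
def IUL' {p q r : ℕ} (ω : MatT p q r) := {i : Fin p // memI ω i ∨ memL' ω i}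

/-- The index set `J ∪ M` (as a subtype of `Fin q`). -/
def JUM {p q r : ℕ} (ω : MatT p q r) := {j : Fin q // memJ ω j ∨ memM ω j}

instance {p q r : ℕ} (ω : MatT p q r) : Finite (IUL' ω) := by
  unfold IUL'; infer_instance

instance {p q r : ℕ} (ω : MatT p q r) : Finite (JUM ω) := by
  unfold JUM; infer_instance

noncomputable instance {p q r : ℕ} (ω : MatT p q r) : Fintype (IUL' ω) :=
  Fintype.ofFinite _

noncomputable instance {p q r : ℕ} (ω : MatT p q r) : Fintype (JUM ω) :=
  Fintype.ofFinite _

instance {p q r : ℕ} (ω : MatT p q r) : DecidableEq (IUL' ω) := by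
  unfold IUL'; infer_instance

instance {p q r : ℕ} (ω : MatT p q r) : DecidableEq (JUM ω) := by
  unfold JUM; infer_instance

/-- The matrix `ς`, indexed by `(I∪L') × (J∪M)`, with `ς_{i,j} = 1` iff `j ∈ J`
and `i = σ(j)`. -/
def sigMat {p q r : ℕ} (ω : MatT p q r) (σ : Fin q → Fin p) :
    Matrix (IUL' ω) (JUM ω) ℂ :=
  Matrix.of fun i j => if memJ ω j.1 ∧ i.1 = σ j.1 then 1 else 0

/-- The space `Γ`: matrices `γ` indexed by `(J∪M) × (I∪L')` such that `ςγ` and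
`γς` are strictly upper triangular for the natural integer order. -/
def GammaSet {p q r : ℕ} (ω : MatT p q r) (σ : Fin q → Fin p) :
    Set (Matrix (JUM ω) (IUL' ω) ℂ) :=
  {γ | (∀ i i' : IUL' ω, i'.1 ≤ i.1 → (sigMat ω σ * γ) i i' = 0) ∧
       (∀ j j' : JUM ω, j'.1 ≤ j.1 → (γ * sigMat ω σ) j j' = 0)}

/-- The subset `R = {-t,…,-1} ∪ I ∪ L'` of `ℤ` (elements of `I, L'` identified
with their 1-based labels in `{1,…,p}`). -/
def Rfin {p q r : ℕ} (ω : MatT p q r) (t : ℕ) : Finset ℤ :=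
  (Finset.univ.image fun i : Fin t => -((i : ℤ) + 1)) ∪
  ((Finset.univ.filter fun i : Fin p => memI ω i ∨ memL' ω i).image
    fun i => ((i : ℕ) : ℤ) + 1)

/-- The subset `S = J ∪ M ∪ {q+1,…,q+s'}` of `ℤ` (elements of `J, M` identified
with their 1-based labels in `{1,…,q}`). -/
def Sfin {p q r : ℕ} (ω : MatT p q r) (s' : ℕ) : Finset ℤ :=
  ((Finset.univ.filter fun j : Fin q => memJ ω j ∨ memM ω j).image
    fun j => ((j : ℕ) : ℤ) + 1) ∪
  (Finset.univ.image fun i : Fin s' => (q : ℤ) + (i : ℤ) + 1)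

/-- The extension-by-zero map `η₂` from `(J∪M) × (I∪L')`-matrices to
`S × R`-matrices. -/
def eta2 {p q r : ℕ} (ω : MatT p q r) (t s' : ℕ) (γ : Matrix (JUM ω) (IUL' ω) ℂ) :
    Matrix {x // x ∈ Sfin ω s'} {x // x ∈ Rfin ω t} ℂ :=
  Matrix.of fun sI rI => ∑ j : JUM ω, ∑ i : IUL' ω,
    if (sI : ℤ) = ((j.1 : ℕ) : ℤ) + 1 ∧ (rI : ℤ) = ((i.1 : ℕ) : ℤ) + 1
    then γ j i else 0

/-!
`η₂` is extension by zero along the order embeddings `J ∪ M ↪ S` and `I ∪ L' ↪ R`, and `ς` is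
the block of `P_w` on them; hence `η₂(γ) P_w η₂(δ) = η₂(γ ς δ)`, which gives the power identity,
and on the blocks the triangularity of `ςγ`, `γς` is that of `P_w z`, `z P_w`.
Conversely an entry `z_{s,r}` of `z ∈ Z` is killed by `P_w z` if `r ≤ w(s)` and by `z P_w` if
`w⁻¹(r) ≤ s`; otherwise `(s, w⁻¹(r))` is an ascent of `w`. Since `w` is decreasing on `M`
(onto the negative part of `R`) and on `{q+1, …, q+s'}` (onto `L'` reversed), every ascent starts
in `J ∪ M` and ends in `w⁻¹(I ∪ L')`, so `z` vanishes off the block.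
-/

open Function

theorem Equiv.symm_toPEquiv_toMatrix_apply {α S R : Type*} [DecidableEq S] [DecidableEq R]
    [Zero α] [One α] (e : S ≃ R) (r : R) (s : S) :
    (e.symm.toPEquiv.toMatrix : Matrix R S α) r s = if r = e s then 1 else 0 := by
  simp [PEquiv.toMatrix_apply, Equiv.eq_symm_apply, eq_comm]

namespace Matrix

variable {α β β' l m n S R : Type*}

def StrictBlockTriangular [Zero α] [LE β] (M : Matrix m m α) (b : m → β) : Prop :=
  ∀ ⦃i j⦄, b j ≤ b i → M i j = 0

def strictTriangularProducts [Fintype m] [Fintype n] [NonUnitalNonAssocSemiring α] [LE β] [LE β']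
    (B : Matrix n m α) (b : n → β) (c : m → β') : Set (Matrix m n α) :=
  {γ | (B * γ).StrictBlockTriangular b ∧ (γ * B).StrictBlockTriangular c}

section ExtendByZero

variable [Fintype m] [Fintype n] [DecidableEq S] [DecidableEq R] {f : m → S} {g : n → R}

def extendByZero [AddCommMonoid α] (f : m → S) (g : n → R) (A : Matrix m n α) : Matrix S R α :=
  of fun s r => ∑ j, ∑ i, if s = f j ∧ r = g i then A j i else 0

section AddCommMonoid

variable [AddCommMonoid α]

theorem extendByZero_apply_apply (hf : Injective f) (hg : Injective g)
    (A : Matrix m n α) (j : m) (i : n) : extendByZero f g A (f j) (g i) = A j i := by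
  simp [extendByZero, hf.eq_iff, hg.eq_iff, ite_and]

theorem extendByZero_apply_eq_zero (A : Matrix m n α) {s : S} {r : R}
    (h : s ∉ Set.range f ∨ r ∉ Set.range g) : extendByZero f g A s r = 0 := by
  refine Finset.sum_eq_zero fun j _ => Finset.sum_eq_zero fun i _ => if_neg ?_
  rintro ⟨rfl, rfl⟩
  simp at h

theorem extendByZero_add (A B : Matrix m n α) :
    extendByZero f g (A + B) = extendByZero f g A + extendByZero f g B := by
  ext s r
  simp only [extendByZero, of_apply, add_apply, ← Finset.sum_add_distrib, ite_add_ite, add_zero]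

theorem extendByZero_smul {K : Type*} [Monoid K] [DistribMulAction K α] (c : K)
    (A : Matrix m n α) : extendByZero f g (c • A) = c • extendByZero f g A := by
  ext s r
  simp only [extendByZero, of_apply, smul_apply, Finset.smul_sum, smul_ite, smul_zero]

theorem extendByZero_injective (hf : Injective f) (hg : Injective g) :
    Injective (extendByZero (α := α) f g) := fun A B h => by
  ext j i
  simpa only [extendByZero_apply_apply hf hg] using congrFun (congrFun h (f j)) (g i)

theorem extendByZero_submatrix (hf : Injective f) (hg : Injective g) {z : Matrix S R α}
    (hz : ∀ s r, s ∉ Set.range f ∨ r ∉ Set.range g → z s r = 0) :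
    extendByZero f g (z.submatrix f g) = z := by
  ext s r
  by_cases h : s ∈ Set.range f ∧ r ∈ Set.range g
  · obtain ⟨⟨j, rfl⟩, ⟨i, rfl⟩⟩ := h
    exact extendByZero_apply_apply hf hg _ j i
  · rw [not_and_or] at h
    rw [extendByZero_apply_eq_zero _ h, hz s r h]

end AddCommMonoid

theorem mul_extendByZero_apply [Fintype S] [NonUnitalNonAssocSemiring α]
    (hf : Injective f) (hg : Injective g) (P : Matrix l S α) (A : Matrix m n α) (k : l) (i : n) :
    (P * extendByZero f g A) k (g i) = (P.submatrix id f * A) k i := by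
  rw [mul_apply, mul_apply]
  refine (Fintype.sum_of_injective f hf _ _ (fun s hs => ?_) fun j => ?_).symm
  · rw [extendByZero_apply_eq_zero _ (Or.inl hs), mul_zero]
  · rw [extendByZero_apply_apply hf hg, submatrix_apply, id]

theorem extendByZero_mul_apply [Fintype R] [NonUnitalNonAssocSemiring α]
    (hf : Injective f) (hg : Injective g) (A : Matrix m n α) (P : Matrix R l α) (j : m) (k : l) :
    (extendByZero f g A * P) (f j) k = (A * P.submatrix g id) j k := by
  rw [mul_apply, mul_apply]
  refine (Fintype.sum_of_injective g hg _ _ (fun r hr => ?_) fun i => ?_).symm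
  · rw [extendByZero_apply_eq_zero _ (Or.inr hr), zero_mul]
  · rw [extendByZero_apply_apply hf hg, submatrix_apply, id]

theorem mul_extendByZero_apply_eq_zero [Fintype S] [NonUnitalNonAssocSemiring α]
    (P : Matrix l S α) (A : Matrix m n α) (k : l) {r : R} (hr : r ∉ Set.range g) :
    (P * extendByZero f g A) k r = 0 := by
  rw [mul_apply]
  exact Finset.sum_eq_zero fun s _ => by rw [extendByZero_apply_eq_zero _ (Or.inr hr), mul_zero]

theorem extendByZero_mul_apply_eq_zero [Fintype R] [NonUnitalNonAssocSemiring α]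
    (A : Matrix m n α) (P : Matrix R l α) {s : S} (hs : s ∉ Set.range f) (k : l) :
    (extendByZero f g A * P) s k = 0 := by
  rw [mul_apply]
  exact Finset.sum_eq_zero fun r _ => by rw [extendByZero_apply_eq_zero _ (Or.inl hs), zero_mul]

theorem extendByZero_mul_mul_extendByZero [Fintype S] [Fintype R] [NonUnitalSemiring α]
    (hf : Injective f) (hg : Injective g) (A C : Matrix m n α) (P : Matrix R S α) :
    extendByZero f g A * P * extendByZero f g C = extendByZero f g (A * P.submatrix g f * C) := by
  refine (extendByZero_submatrix hf hg fun s r h => ?_).symm.trans ?_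
  · rcases h with hs | hr
    · rw [Matrix.mul_assoc, extendByZero_mul_apply_eq_zero _ _ hs]
    · exact mul_extendByZero_apply_eq_zero _ _ _ hr
  · congr 1
    ext j i
    rw [submatrix_apply, mul_extendByZero_apply hf hg, mul_apply, mul_apply]
    simp only [submatrix_apply, id, extendByZero_mul_apply hf hg]
    rfl

theorem extendByZero_pow_mul [DecidableEq m] [Fintype S] [Fintype R] [Semiring α]
    (hf : Injective f) (hg : Injective g) (A : Matrix m n α) (P : Matrix R S α) (l : ℕ) :
    extendByZero f g ((A * P.submatrix g f) ^ l * A) =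
      (extendByZero f g A * P) ^ l * extendByZero f g A := by
  induction l with
  | zero => simp
  | succ l ih =>
    calc extendByZero f g ((A * P.submatrix g f) ^ (l + 1) * A)
        = extendByZero f g (A * P.submatrix g f * ((A * P.submatrix g f) ^ l * A)) := by
          rw [pow_succ', Matrix.mul_assoc]
      _ = extendByZero f g A * P * ((extendByZero f g A * P) ^ l * extendByZero f g A) := by
          rw [← ih, extendByZero_mul_mul_extendByZero hf hg]
      _ = (extendByZero f g A * P) ^ (l + 1) * extendByZero f g A := by
          rw [pow_succ', Matrix.mul_assoc (extendByZero f g A * P)]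

end ExtendByZero

section Order

variable [Fintype S] [Fintype R] [LinearOrder S] [LinearOrder R] {f : m → S} {g : n → R}

theorem apply_eq_zero_of_mem_strictTriangularProducts [NonAssocSemiring α] (e : S ≃ R)
    (hascent : ∀ s s', s < s' → e s < e s' → s ∈ Set.range f ∧ e s' ∈ Set.range g)
    {z : Matrix S R α}
    (hz : z ∈ strictTriangularProducts (e.symm.toPEquiv.toMatrix : Matrix R S α) id id)
    {s : S} {r : R} (h : s ∉ Set.range f ∨ r ∉ Set.range g) : z s r = 0 := by
  obtain ⟨hPz, hzP⟩ := hz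
  rw [PEquiv.toMatrix_toPEquiv_mul] at hPz
  rw [PEquiv.mul_toMatrix_toPEquiv, Equiv.symm_symm] at hzP
  rcases le_or_gt r (e s) with hle | hlt
  · simpa using hPz hle
  rcases le_or_gt (e.symm r) s with hle' | hlt'
  · simpa using hzP hle'
  have hblock := hascent s (e.symm r) hlt' (by rwa [Equiv.apply_symm_apply])
  rw [Equiv.apply_symm_apply] at hblock
  exact absurd hblock (not_and_or.2 h)

variable [Fintype m] [Fintype n]

theorem mapsTo_extendByZero [NonUnitalNonAssocSemiring α]
    (hf : Injective f) (hg : Injective g) (P : Matrix R S α)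
    (hR : ∀ r, r ∉ Set.range g → ∀ i, r < g i) (hS : ∀ s, s ∉ Set.range f → ∀ j, f j < s) :
    Set.MapsTo (extendByZero f g)
      (strictTriangularProducts (P.submatrix g f) g f) (strictTriangularProducts P id id) := by
  rintro γ ⟨hPγ, hγP⟩
  constructor
  · intro r r' hle
    by_cases hr' : r' ∈ Set.range g
    · obtain ⟨i', rfl⟩ := hr'
      by_cases hr : r ∈ Set.range g
      · obtain ⟨i, rfl⟩ := hr
        rw [mul_extendByZero_apply hf hg]
        exact hPγ hle
      · exact absurd hle (hR r hr i').not_ge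
    · exact mul_extendByZero_apply_eq_zero _ _ _ hr'
  · intro s s' hle
    by_cases hs : s ∈ Set.range f
    · obtain ⟨j, rfl⟩ := hs
      by_cases hs' : s' ∈ Set.range f
      · obtain ⟨j', rfl⟩ := hs'
        rw [extendByZero_mul_apply hf hg]
        exact hγP hle
      · exact absurd hle (hS s' hs' j).not_ge
    · exact extendByZero_mul_apply_eq_zero _ _ hs _

theorem surjOn_extendByZero [NonAssocSemiring α] (hf : Injective f) (hg : Injective g)
    (e : S ≃ R) (hascent : ∀ s s', s < s' → e s < e s' → s ∈ Set.range f ∧ e s' ∈ Set.range g) :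
    Set.SurjOn (extendByZero f g)
      (strictTriangularProducts ((e.symm.toPEquiv.toMatrix : Matrix R S α).submatrix g f) g f)
      (strictTriangularProducts (e.symm.toPEquiv.toMatrix : Matrix R S α) id id) := by
  intro z hZ
  have hz : extendByZero f g (z.submatrix f g) = z := extendByZero_submatrix hf hg
    fun s r h => apply_eq_zero_of_mem_strictTriangularProducts e hascent hZ h
  obtain ⟨hPz, hzP⟩ := hZ
  refine ⟨z.submatrix f g, ⟨fun i i' hle => ?_, fun j j' hle => ?_⟩, hz⟩
  · have := hPz (show id (g i') ≤ id (g i) from hle)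
    rwa [← hz, mul_extendByZero_apply hf hg] at this
  · have := hzP (show id (f j') ≤ id (f j) from hle)
    rwa [← hz, extendByZero_mul_apply hf hg] at this

theorem bijOn_extendByZero [NonAssocSemiring α] (hf : Injective f) (hg : Injective g)
    (e : S ≃ R) (hR : ∀ r, r ∉ Set.range g → ∀ i, r < g i)
    (hS : ∀ s, s ∉ Set.range f → ∀ j, f j < s)
    (hascent : ∀ s s', s < s' → e s < e s' → s ∈ Set.range f ∧ e s' ∈ Set.range g) :
    Set.BijOn (extendByZero f g)
      (strictTriangularProducts ((e.symm.toPEquiv.toMatrix : Matrix R S α).submatrix g f) g f)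
      (strictTriangularProducts (e.symm.toPEquiv.toMatrix : Matrix R S α) id id) :=
  ⟨mapsTo_extendByZero hf hg _ hR hS, (extendByZero_injective hf hg).injOn,
    surjOn_extendByZero hf hg e hascent⟩

end Order

end Matrix

section Indexing

variable {p q r : ℕ} (ω : MatT p q r)

def toSfin (s' : ℕ) (j : JUM ω) : {x // x ∈ Sfin ω s'} :=
  ⟨((j.1 : ℕ) : ℤ) + 1, Finset.mem_union_left _ (by simpa using ⟨j.1, j.2, rfl⟩)⟩

def toRfin (t : ℕ) (i : IUL' ω) : {x // x ∈ Rfin ω t} :=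
  ⟨((i.1 : ℕ) : ℤ) + 1, Finset.mem_union_right _ (by simpa using ⟨i.1, i.2, rfl⟩)⟩

variable {ω} {t s' : ℕ}

@[simp]
theorem coe_toSfin (j : JUM ω) : (toSfin ω s' j : ℤ) = ((j.1 : ℕ) : ℤ) + 1 := rfl

@[simp]
theorem coe_toRfin (i : IUL' ω) : (toRfin ω t i : ℤ) = ((i.1 : ℕ) : ℤ) + 1 := rfl

theorem toSfin_le_toSfin {j j' : JUM ω} : toSfin ω s' j ≤ toSfin ω s' j' ↔ j.1 ≤ j'.1 := by
  rw [← Subtype.coe_le_coe, coe_toSfin, coe_toSfin, Fin.le_iff_val_le_val]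
  omega

theorem toRfin_le_toRfin {i i' : IUL' ω} : toRfin ω t i ≤ toRfin ω t i' ↔ i.1 ≤ i'.1 := by
  rw [← Subtype.coe_le_coe, coe_toRfin, coe_toRfin, Fin.le_iff_val_le_val]
  omega

theorem toSfin_lt_toSfin {j j' : JUM ω} : toSfin ω s' j < toSfin ω s' j' ↔ j.1 < j'.1 :=
  lt_iff_lt_of_le_iff_le toSfin_le_toSfin

theorem toSfin_injective : Injective (toSfin ω s') := fun _ _ h =>
  Subtype.ext (le_antisymm (toSfin_le_toSfin.1 h.le) (toSfin_le_toSfin.1 h.ge))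

theorem toRfin_injective : Injective (toRfin ω t) := fun _ _ h =>
  Subtype.ext (le_antisymm (toRfin_le_toRfin.1 h.le) (toRfin_le_toRfin.1 h.ge))

theorem mem_range_toSfin_or (ς : {x // x ∈ Sfin ω s'}) :
    ς ∈ Set.range (toSfin ω s') ∨ ∃ a : Fin s', (ς : ℤ) = q + a + 1 := by
  have hς := ς.2
  -- in `Sfin` (and `Rfin`) the filtered `Finset (Fin q)` is coerced to `Finset ℕ` monadically
  simp only [Sfin, Finset.pure_def, Finset.bind_def, Finset.sup_singleton_apply,
    Finset.mem_union, Finset.mem_image, Finset.mem_filter, Finset.mem_univ, true_and,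
    exists_exists_and_eq_and] at hς
  rcases hς with ⟨j, hj, hjς⟩ | ⟨a, haς⟩
  · exact Or.inl ⟨⟨j, hj⟩, Subtype.ext hjς⟩
  · exact Or.inr ⟨a, haς.symm⟩

theorem mem_range_toRfin_or (ρ : {x // x ∈ Rfin ω t}) :
    ρ ∈ Set.range (toRfin ω t) ∨ ∃ b : Fin t, (ρ : ℤ) = -(b + 1) := by
  have hρ := ρ.2
  simp only [Rfin, Finset.pure_def, Finset.bind_def, Finset.sup_singleton_apply,
    Finset.mem_union, Finset.mem_image, Finset.mem_filter, Finset.mem_univ, true_and,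
    exists_exists_and_eq_and] at hρ
  rcases hρ with ⟨b, hbρ⟩ | ⟨i, hi, hiρ⟩
  · exact Or.inr ⟨b, hbρ.symm⟩
  · exact Or.inl ⟨⟨i, hi⟩, Subtype.ext hiρ⟩

theorem toSfin_lt_of_notMem_range {ς : {x // x ∈ Sfin ω s'}} (hς : ς ∉ Set.range (toSfin ω s'))
    (j : JUM ω) : toSfin ω s' j < ς := by
  obtain ⟨a, ha⟩ := (mem_range_toSfin_or ς).resolve_left hς
  rw [← Subtype.coe_lt_coe, ha, coe_toSfin]
  omega

theorem lt_toRfin_of_notMem_range {ρ : {x // x ∈ Rfin ω t}} (hρ : ρ ∉ Set.range (toRfin ω t))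
    (i : IUL' ω) : ρ < toRfin ω t i := by
  obtain ⟨b, hb⟩ := (mem_range_toRfin_or ρ).resolve_left hρ
  rw [← Subtype.coe_lt_coe, hb, coe_toRfin]
  omega

theorem mem_range_toRfin_of_pos {ρ : {x // x ∈ Rfin ω t}} (hρ : 0 < (ρ : ℤ)) :
    ρ ∈ Set.range (toRfin ω t) :=
  (mem_range_toRfin_or ρ).resolve_right fun ⟨b, hb⟩ => by omega

theorem eta2_eq_extendByZero : eta2 ω t s' = extendByZero (toSfin ω s') (toRfin ω t) := by
  ext γ ς ρ
  simp only [eta2, extendByZero, of_apply, Subtype.ext_iff, coe_toSfin, coe_toRfin]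

end Indexing

section Permutation

variable {p q r : ℕ} {ω : MatT p q r} {σ : Fin q → Fin p} {t s' : ℕ} {mE : Fin t → Fin q}
  {lE : Fin s' → Fin p} {w : {x // x ∈ Sfin ω s'} → {x // x ∈ Rfin ω t}}

theorem mem_range_toSfin_and_toRfin_of_lt_of_lt (hmE : StrictMono mE)
    (hmEr : ∀ j, memM ω j ↔ ∃ a, mE a = j) (hlE : StrictMono lE)
    (hwM : ∀ (sI : {x // x ∈ Sfin ω s'}) (i : Fin t),
      (sI : ℤ) = ((mE i : ℕ) : ℤ) + 1 → ((w sI : ℤ) = -((i : ℤ) + 1)))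
    (hwJ : ∀ (sI : {x // x ∈ Sfin ω s'}) (j : Fin q), memJ ω j →
      (sI : ℤ) = ((j : ℕ) : ℤ) + 1 → ((w sI : ℤ) = ((σ j : ℕ) : ℤ) + 1))
    (hwL : ∀ (sI : {x // x ∈ Sfin ω s'}) (i : Fin s'),
      (sI : ℤ) = (q : ℤ) + (i : ℤ) + 1 → (w sI : ℤ) = ((lE i.rev : ℕ) : ℤ) + 1)
    {ς ς' : {x // x ∈ Sfin ω s'}} (hlt : ς < ς') (hw : w ς < w ς') :
    ς ∈ Set.range (toSfin ω s') ∧ w ς' ∈ Set.range (toRfin ω t) := by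
  rcases mem_range_toSfin_or ς' with ⟨j', rfl⟩ | ⟨b, hb⟩
  · have hς : ς ∈ Set.range (toSfin ω s') := by
      by_contra h
      exact (toSfin_lt_of_notMem_range h j').not_gt hlt
    refine ⟨hς, ?_⟩
    by_cases hJ' : memJ ω j'.1
    · exact mem_range_toRfin_of_pos (by rw [hwJ _ _ hJ' (coe_toSfin j')]; omega)
    exfalso
    obtain ⟨b, hb⟩ := (hmEr j'.1).1 (j'.2.resolve_left hJ')
    have hwb := hwM _ b (by rw [coe_toSfin, hb])
    obtain ⟨j, rfl⟩ := hς
    rw [← Subtype.coe_lt_coe] at hw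
    by_cases hJ : memJ ω j.1
    · have := hwJ _ _ hJ (coe_toSfin j)
      omega
    obtain ⟨a, ha⟩ := (hmEr j.1).1 (j.2.resolve_left hJ)
    have hwa := hwM _ a (by rw [coe_toSfin, ha])
    have hab : a < b := hmE.lt_iff_lt.1 (by rw [ha, hb]; exact toSfin_lt_toSfin.1 hlt)
    rw [Fin.lt_def] at hab
    omega
  · refine ⟨?_, mem_range_toRfin_of_pos (by rw [hwL _ b hb]; omega)⟩
    by_contra hς
    obtain ⟨a, ha⟩ := (mem_range_toSfin_or ς).resolve_left hς
    rw [← Subtype.coe_lt_coe] at hlt hw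
    rw [hwL _ a ha, hwL _ b hb] at hw
    have hab := hlE (Fin.rev_lt_rev.2 (show a < b by rw [Fin.lt_def]; omega))
    rw [Fin.lt_def] at hab
    omega

theorem sigMat_eq_submatrix (hmEr : ∀ j, memM ω j ↔ ∃ a, mE a = j)
    (hwM : ∀ (sI : {x // x ∈ Sfin ω s'}) (i : Fin t),
      (sI : ℤ) = ((mE i : ℕ) : ℤ) + 1 → ((w sI : ℤ) = -((i : ℤ) + 1)))
    (hwJ : ∀ (sI : {x // x ∈ Sfin ω s'}) (j : Fin q), memJ ω j →
      (sI : ℤ) = ((j : ℕ) : ℤ) + 1 → ((w sI : ℤ) = ((σ j : ℕ) : ℤ) + 1))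
    {Pw : Matrix {x // x ∈ Rfin ω t} {x // x ∈ Sfin ω s'} ℂ}
    (hPw : ∀ ρ ς, Pw ρ ς = if (ρ : ℤ) = (w ς : ℤ) then 1 else 0) :
    sigMat ω σ = Pw.submatrix (toRfin ω t) (toSfin ω s') := by
  ext i j
  rw [submatrix_apply, hPw, sigMat, of_apply, coe_toRfin]
  by_cases hJ : memJ ω j.1
  · simp [hwJ _ _ hJ (coe_toSfin j), hJ, Fin.ext_iff]
  · obtain ⟨a, ha⟩ := (hmEr _).1 (j.2.resolve_left hJ)
    rw [hwM _ a (by rw [coe_toSfin, ha]), if_neg (fun h => hJ h.1), if_neg (by omega)]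

theorem gammaSet_eq_strictTriangularProducts (t s' : ℕ) :
    GammaSet ω σ = strictTriangularProducts (sigMat ω σ) (toRfin ω t) (toSfin ω s') := by
  ext γ
  simp only [GammaSet, strictTriangularProducts, StrictBlockTriangular, toRfin_le_toRfin,
    toSfin_le_toSfin, Set.mem_ofPred_eq]

end Permutation

/-- `η₂` restricts to a linear bijection from `Γ` onto
`Z = {z : P_w z and z P_w strictly upper triangular}`, compatible with the
products `(γς)^ℓ γ ↦ (z P_w)^ℓ z`. -/
theorem eta2_bijection (p q r : ℕ)
    (ω : MatT p q r) (σ : Fin q → Fin p)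
    (t s' : ℕ)
    (mE : Fin t → Fin q) (hmE : StrictMono mE) (hmEr : ∀ j, memM ω j ↔ ∃ a, mE a = j)
    (lE : Fin s' → Fin p) (hlE : StrictMono lE)
    (w : {x // x ∈ Sfin ω s'} → {x // x ∈ Rfin ω t})
    (hwbij : Function.Bijective w)
    (hwM : ∀ (sI : {x // x ∈ Sfin ω s'}) (i : Fin t),
      (sI : ℤ) = ((mE i : ℕ) : ℤ) + 1 → ((w sI : ℤ) = -((i : ℤ) + 1)))
    (hwJ : ∀ (sI : {x // x ∈ Sfin ω s'}) (j : Fin q), memJ ω j →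
      (sI : ℤ) = ((j : ℕ) : ℤ) + 1 → ((w sI : ℤ) = ((σ j : ℕ) : ℤ) + 1))
    (hwL : ∀ (sI : {x // x ∈ Sfin ω s'}) (i : Fin s'),
      (sI : ℤ) = (q : ℤ) + (i : ℤ) + 1 →
      ((w sI : ℤ) = ((lE ⟨s' - 1 - (i : ℕ), by have := i.isLt; omega⟩ : ℕ) : ℤ) + 1))
    (Pw : Matrix {x // x ∈ Rfin ω t} {x // x ∈ Sfin ω s'} ℂ)
    (hPw : ∀ ρ ς, Pw ρ ς = if (ρ : ℤ) = (w ς : ℤ) then 1 else 0)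
    (Zset : Set (Matrix {x // x ∈ Sfin ω s'} {x // x ∈ Rfin ω t} ℂ))
    (hZ : Zset = {z |
      (∀ ρ ρ' : {x // x ∈ Rfin ω t}, (ρ' : ℤ) ≤ (ρ : ℤ) → (Pw * z) ρ ρ' = 0) ∧
      (∀ ς ς' : {x // x ∈ Sfin ω s'}, (ς' : ℤ) ≤ (ς : ℤ) → (z * Pw) ς ς' = 0)}) :
    (∀ γ γ' : Matrix (JUM ω) (IUL' ω) ℂ,
      eta2 ω t s' (γ + γ') = eta2 ω t s' γ + eta2 ω t s' γ') ∧
    (∀ (z : ℂ) (γ : Matrix (JUM ω) (IUL' ω) ℂ),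
      eta2 ω t s' (z • γ) = z • eta2 ω t s' γ) ∧
    Set.BijOn (eta2 ω t s') (GammaSet ω σ) Zset ∧
    (∀ γ ∈ GammaSet ω σ, ∀ l : ℕ,
      eta2 ω t s' ((γ * sigMat ω σ) ^ l * γ) =
        (eta2 ω t s' γ * Pw) ^ l * eta2 ω t s' γ) := by
  set e := Equiv.ofBijective w hwbij
  have hPe : Pw = e.symm.toPEquiv.toMatrix := by
    ext ρ ς
    rw [hPw, Equiv.symm_toPEquiv_toMatrix_apply]
    exact if_congr Subtype.ext_iff.symm rfl rfl
  have hwL' : ∀ (ς : {x // x ∈ Sfin ω s'}) (a : Fin s'),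
      (ς : ℤ) = q + a + 1 → (w ς : ℤ) = ((lE a.rev : ℕ) : ℤ) + 1 := fun ς a h => by
    have hrev : a.rev = ⟨s' - 1 - a, by omega⟩ := Fin.ext (by rw [Fin.val_rev]; dsimp only; omega)
    rw [hwL ς a h, hrev]
  have hsig := sigMat_eq_submatrix (σ := σ) hmEr hwM hwJ hPw
  have hZ' : Zset = strictTriangularProducts Pw id id := hZ
  rw [eta2_eq_extendByZero]
  refine ⟨extendByZero_add, extendByZero_smul, ?_, fun γ _ l => ?_⟩
  · rw [gammaSet_eq_strictTriangularProducts t s', hZ', hsig, hPe]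
    exact bijOn_extendByZero toSfin_injective toRfin_injective e
      (fun _ h => lt_toRfin_of_notMem_range h) (fun _ h => toSfin_lt_of_notMem_range h)
      (fun _ _ => mem_range_toSfin_and_toRfin_of_lt_of_lt hmE hmEr hlE hwM hwJ hwL')
  · rw [hsig, extendByZero_pow_mul toSfin_injective toRfin_injective]
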